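/- Let D be a ghost-free diagram, S(D) = {(r,c) ∈ D : (r,c) ∉ R(D) and (r*,c) ∉ R(D) for all r* > r}, and f_D(T̃) = T̃ \ S(D). Then f_D : GKD(D) → GKD(f_D(D)) is a bijection preserving the set of ghost cells of each diagram. Consequently, MaxG-hat(D) = MaxG-hat(f_D(D)). -/
import Mathlib


open Finset

/-- A diagram: a finite set of cells in ℕ×ℕ (recorded as (row, column)),
some of which may be marked as ghost cells. -/
structure Diagram where
  cells : Finset (ℕ × ℕ)
  ghosts : Finset (ℕ × ℕ)
deriving DecidableEq

/-- `(r,c)` is the rightmost cell (ghost or not) in row `r` of `D`. -/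
def Rightmost (D : Diagram) (r c : ℕ) : Prop :=
  (r, c) ∈ D.cells ∧ ∀ c' > c, (r, c') ∉ D.cells

/-- A nontrivial K-Kohnert move at row `r` of `D` is possible, taking the
rightmost cell `(r,c)` of row `r` (a non-ghost cell) down to the highest empty
position `(rhat, c)` below it in column `c`, with no ghost cell in between. -/
def KohnertMovable (D : Diagram) (r c rhat : ℕ) : Prop :=
  Rightmost D r c ∧ (r, c) ∉ D.ghosts ∧
  1 ≤ rhat ∧ rhat < r ∧ (rhat, c) ∉ D.cells ∧
  ∀ r', rhat < r' → r' < r → (r', c) ∈ D.cells ∧ (r', c) ∉ D.ghosts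

/-- Result of a Kohnert move: the cell `(r,c)` moves to `(rhat,c)`. -/
def applyKohnert (D : Diagram) (r c rhat : ℕ) : Diagram :=
  ⟨insert (rhat, c) (D.cells.erase (r, c)), D.ghosts⟩

/-- Result of a ghost move: the cell `(r,c)` moves to `(rhat,c)`, leaving a
ghost cell at `(r,c)`. -/
def applyGhost (D : Diagram) (r c rhat : ℕ) : Diagram :=
  ⟨insert (rhat, c) D.cells, insert (r, c) D.ghosts⟩

/-- One (nontrivial) K-Kohnert move. -/
def KStep (D T : Diagram) : Prop :=
  ∃ r c rhat, KohnertMovable D r c rhat ∧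
    (T = applyKohnert D r c rhat ∨ T = applyGhost D r c rhat)

/-- One (nontrivial) ghost move. -/
def GStep (D T : Diagram) : Prop :=
  ∃ r c rhat, KohnertMovable D r c rhat ∧ T = applyGhost D r c rhat

/-- All diagrams obtainable from `D` by sequences of K-Kohnert moves. -/
def KKD (D : Diagram) : Set Diagram := {T | Relation.ReflTransGen KStep D T}

/-- All diagrams obtainable from `D` by sequences of ghost moves. -/
def GKD (D : Diagram) : Set Diagram := {T | Relation.ReflTransGen GStep D T}

/-- Maximum number of ghost cells over `KKD D`. -/
noncomputable def MaxG (D : Diagram) : ℕ :=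
  sSup {n | ∃ T ∈ KKD D, T.ghosts.card = n}

/-- Maximum number of ghost cells over `GKD D`. -/
noncomputable def MaxGhat (D : Diagram) : ℕ :=
  sSup {n | ∃ T ∈ GKD D, T.ghosts.card = n}

/-- Dark clouds of a ghost-free diagram: working from the top row down, mark in
each row the rightmost cell having no marked cell above it in its column. -/
def dark (D : Finset (ℕ × ℕ)) : Finset (ℕ × ℕ) :=
  ((List.range (D.sup Prod.fst + 1)).reverse).foldl
    (fun acc r =>
      let cand := (D.filter (fun p => p.1 = r ∧ ∀ q ∈ acc, q.2 ≠ p.2)).image Prod.snd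
      if h : cand.Nonempty then insert (r, cand.max' h) acc else acc) ∅

/-- Snowflakes of the snow diagram: empty positions lying below a dark cloud
in its column. -/
def snowflakes (D : Finset (ℕ × ℕ)) : Finset (ℕ × ℕ) :=
  ((Finset.range (D.sup Prod.fst + 1)) ×ˢ (D.image Prod.snd)).filter
    (fun p => 1 ≤ p.1 ∧ p ∉ D ∧ ∃ q ∈ dark D, q.2 = p.2 ∧ p.1 < q.1)

/-- Number of snowflakes of the snow diagram of a ghost-free diagram. -/
def sf (D : Finset (ℕ × ℕ)) : ℕ := (snowflakes D).card

/-- A generalized skew diagram: each nonempty row is a contiguous run of cells,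
and both leftmost and rightmost columns weakly increase with the row index. -/
def IsGenSkew (D : Finset (ℕ × ℕ)) : Prop :=
  (∀ p ∈ D, 1 ≤ p.1 ∧ 1 ≤ p.2) ∧
  (∀ r c₁ c c₂, (r, c₁) ∈ D → (r, c₂) ∈ D → c₁ ≤ c → c ≤ c₂ → (r, c) ∈ D) ∧
  (∀ r₁ r₂ c₁, r₁ < r₂ → (r₁, c₁) ∈ D → (∃ c, (r₂, c) ∈ D) →
      ∃ c₂, c₁ ≤ c₂ ∧ (r₂, c₂) ∈ D) ∧
  (∀ r₁ r₂ c₂, r₁ < r₂ → (r₂, c₂) ∈ D → (∃ c, (r₁, c) ∈ D) →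
      ∃ c₁, c₁ ≤ c₂ ∧ (r₁, c₁) ∈ D)

/-- `Key(D)`: the minimal key diagram containing `D`. -/
def keyOf (D : Finset (ℕ × ℕ)) : Finset (ℕ × ℕ) :=
  D.biUnion (fun p => (Finset.Icc 1 p.2).image (fun c => (p.1, c)))

/-- Largest index `i < j` (0-indexed) with `α_i > 0`. -/
def prevIdx (α : List ℕ) (j : ℕ) : Option ℕ :=
  ((List.range j).filter (fun i => 0 < α.getD i 0)).max?

/-- Contribution of step 2 of the skew-diagram construction at (0-indexed) row `j`. -/
def step2contrib (α : List ℕ) (j : ℕ) : ℕ :=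
  if 0 < α.getD j 0 then
    match prevIdx α j with
    | none => 0
    | some i => α.getD i 0 - α.getD j 0
  else 0

/-- Total rightward shift of (0-indexed) row `k` in the skew-diagram construction. -/
def rowShift (α : List ℕ) (k : ℕ) : ℕ :=
  (∑ j ∈ Finset.range (k + 1), step2contrib α j) +
    ((List.range k).filter (fun i => α.getD i 0 = 0)).length

/-- The skew diagram `S(α)` of a weak composition `α`. -/
def skewDiagram (α : List ℕ) : Finset (ℕ × ℕ) :=
  (Finset.range α.length).biUnion (fun i =>
    (Finset.Icc 1 (α.getD i 0)).image (fun c => (i + 1, c + rowShift α i)))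

/-- The lock diagram of a weak composition `α`: `α_i` right-justified cells in row `i`. -/
def lockDiagram (α : List ℕ) : Finset (ℕ × ℕ) :=
  (Finset.range α.length).biUnion (fun i =>
    (Finset.range (α.getD i 0)).image (fun j => (i + 1, α.foldr max 0 - j)))

/-- `L` is a lock-tableau labeling of content `α` on the given set of cells. -/
def IsLockLabeling (α : List ℕ) (cells : Finset (ℕ × ℕ)) (L : ℕ × ℕ → ℕ) : Prop :=
  (∀ p ∈ cells, 1 ≤ L p ∧ L p ≤ α.length) ∧
  (∀ j, 1 ≤ j → j ≤ α.length → 0 < α.getD (j - 1) 0 →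
    ∀ c, α.foldr max 0 - α.getD (j - 1) 0 + 1 ≤ c → c ≤ α.foldr max 0 →
      ∃! p, p ∈ cells ∧ p.2 = c ∧ L p = j) ∧
  (∀ p ∈ cells, p.1 ≤ L p) ∧
  (∀ p ∈ cells, ∀ q ∈ cells, L p = L q → p.2 < q.2 → q.1 ≤ p.1) ∧
  (∀ p ∈ cells, ∀ q ∈ cells, p.2 = q.2 → p.1 < q.1 → L p < L q)

/-- Label of the position `(r,c)` of `T`: for a ghost cell, the label of the
highest non-ghost cell weakly below it in column `c`. -/
def ghostLabel (T : Diagram) (L : ℕ × ℕ → ℕ) (r c : ℕ) : ℕ :=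
  L (((T.cells \ T.ghosts).filter (fun p => p.2 = c ∧ p.1 ≤ r)).sup Prod.fst, c)

/-- The labels, within one column with row set `Rc`, of the modified snow
diagram, where `U` is the set of rows occupied in later columns; rows are
processed from top to bottom. -/
def colLabelList (Rc U : Finset ℕ) : List (ℕ × ℕ) :=
  ((Rc.sort (· ≤ ·)).reverse).foldl
    (fun acc r =>
      if r ∈ U then (r, r) :: acc
      else
        let cand := U.filter (fun s => s < r ∧ ∀ q ∈ acc, q.2 ≠ s)
        if h : cand.Nonempty then (r, cand.max' h) :: acc else (r, 1) :: acc)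
    []

/-- The label of a cell `p ∈ D` in the modified snow diagram `snow-hat(D)`. -/
def hatLabel (D : Finset (ℕ × ℕ)) (p : ℕ × ℕ) : ℕ :=
  ((colLabelList ((D.filter (fun q => q.2 = p.2)).image Prod.fst)
      ((D.filter (fun q => p.2 < q.2)).image Prod.fst)).lookup p.1).getD 0

/-- Number of snowflakes of the modified snow diagram `snow-hat(D)`. -/
def sfhat (D : Finset (ℕ × ℕ)) : ℕ :=
  (((Finset.range (D.sup Prod.fst + 1)) ×ˢ (D.image Prod.snd)).filter
    (fun p => 1 ≤ p.1 ∧ p ∉ D ∧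
      ∃ q ∈ D, q.2 = p.2 ∧ p.1 < q.1 ∧ hatLabel D q ≤ p.1)).card

/-- Cells of `D` that are rightmost in their row. -/
def rmostCells (D : Finset (ℕ × ℕ)) : Finset (ℕ × ℕ) :=
  D.filter (fun p => ∀ q ∈ D, q.1 = p.1 → q.2 ≤ p.2)

/-- `S(D)`: cells that are not rightmost in their row and such that no cell
above them in their column is rightmost in its row. -/
def SofD (D : Finset (ℕ × ℕ)) : Finset (ℕ × ℕ) :=
  D.filter (fun p => p ∉ rmostCells D ∧
    ∀ q ∈ D, q.2 = p.2 → p.1 < q.1 → q ∉ rmostCells D)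

/-- Restriction of `D` to the columns in `C`. -/
def Res (D : Finset (ℕ × ℕ)) (C : Finset ℕ) : Finset (ℕ × ℕ) :=
  D.filter (fun p => p.2 ∈ C)

open Classical in
/-- The ghost move at row `r`, as a function (identity when no move is possible). -/
noncomputable def gmove (T : Diagram) (r : ℕ) : Diagram :=
  if h : ∃ p : ℕ × ℕ, KohnertMovable T r p.1 p.2 then
    applyGhost T r h.choose.1 h.choose.2
  else T

section ReductionAux

lemma Diagram.ext' {T U : Diagram} (hc : T.cells = U.cells)
    (hg : T.ghosts = U.ghosts) : T = U := by
  cases T; cases U; simp_all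


variable {D : Finset (ℕ × ℕ)}

lemma SofD_subset : SofD D ⊆ D := Finset.filter_subset _ _

lemma exists_right_of_not_rmost {q : ℕ × ℕ} (hq : q ∈ D) (h : q ∉ rmostCells D) :
    ∃ c', q.2 < c' ∧ (q.1, c') ∈ D := by
  by_contra h'
  push_neg at h'
  refine h (Finset.mem_filter.mpr ⟨hq, fun p hp hp1 => ?_⟩)
  by_contra hlt
  push_neg at hlt
  exact absurd hp (by
    have : (q.1, p.2) = p := by cases p; cases q; simp_all
    rw [← this]; exact h' p.2 hlt)

lemma S_not_rmost {p : ℕ × ℕ} (hp : p ∈ SofD D) :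
    ∃ c', p.2 < c' ∧ (p.1, c') ∈ D := by
  rw [SofD, Finset.mem_filter] at hp
  exact exists_right_of_not_rmost hp.1 hp.2.1

lemma exists_rmost_ge {r c₀ : ℕ} (h : (r, c₀) ∈ D) :
    ∃ m, c₀ ≤ m ∧ (r, m) ∈ D ∧ (r, m) ∈ rmostCells D := by
  classical
  set s := (D.filter (fun q => q.1 = r)).image Prod.snd with hs
  have hne : s.Nonempty := ⟨c₀, Finset.mem_image.mpr ⟨(r, c₀),
    Finset.mem_filter.mpr ⟨h, rfl⟩, rfl⟩⟩
  set m := s.max' hne with hm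
  have hmem : m ∈ s := s.max'_mem hne
  obtain ⟨q, hq, hq2⟩ := Finset.mem_image.mp hmem
  obtain ⟨hqD, hq1⟩ := Finset.mem_filter.mp hq
  have hqeq : q = (r, m) := by cases q; simp_all
  have hub : ∀ q' ∈ D, q'.1 = r → q'.2 ≤ m := by
    intro q' hq' h1
    exact s.le_max' _ (Finset.mem_image.mpr ⟨q', Finset.mem_filter.mpr ⟨hq', h1⟩, rfl⟩)
  refine ⟨m, ?_, hqeq ▸ hqD, Finset.mem_filter.mpr ⟨hqeq ▸ hqD, fun q' hq' h1 => hub q' hq' h1⟩⟩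
  exact hub _ h rfl

lemma rmost_not_S {p : ℕ × ℕ} (h : p ∈ rmostCells D) : p ∉ SofD D := by
  intro hS
  rw [SofD, Finset.mem_filter] at hS
  exact hS.2.1 h

/-- If all cells of `D \ SofD D` are present in `A` and `(r,c)` is rightmost of
row `r` in `A`, then no cell of `SofD D` lies strictly right of `(r,c)` in row `r`. -/
lemma notS_of_right {A : Finset (ℕ × ℕ)} (hA : D \ SofD D ⊆ A) {r c : ℕ}
    (hR : ∀ c' > c, (r, c') ∉ A) {c' : ℕ} (hc : c < c') : (r, c') ∉ SofD D := by
  intro hS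
  obtain ⟨c'', hc'', hmem⟩ := S_not_rmost hS
  obtain ⟨m, hm1, hmD, hmR⟩ := exists_rmost_ge hmem
  have hmA : (r, m) ∈ A := hA (Finset.mem_sdiff.mpr ⟨hmD, rmost_not_S hmR⟩)
  exact hR m (by omega) hmA

/-- The invariant maintained along ghost moves from a ghost-free diagram `D`. -/
def RedInv (D : Finset (ℕ × ℕ)) (T : Diagram) : Prop :=
  D ⊆ T.cells ∧ ∀ p ∈ SofD D, ∀ r, p.1 < r → (r, p.2) ∈ T.cells →
    ∃ c', p.2 < c' ∧ (r, c') ∈ T.cells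

lemma redInv_base : RedInv D ⟨D, ∅⟩ := by
  refine ⟨subset_rfl, fun p hp r hr hmem => ?_⟩
  have hS := hp
  rw [SofD, Finset.mem_filter] at hS
  have := hS.2.2 (r, p.2) hmem rfl hr
  obtain ⟨c', hc', hm⟩ := exists_right_of_not_rmost hmem this
  exact ⟨c', hc', hm⟩

lemma redInv_step {T U : Diagram} (hI : RedInv D T) (h : GStep T U) : RedInv D U := by
  obtain ⟨r, c, rhat, ⟨⟨hrc, hRmax⟩, hng, h1, hlt, hempty, hbet⟩, rfl⟩ := h
  refine ⟨hI.1.trans (Finset.subset_insert _ _), fun p hp r' hr' hmem => ?_⟩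
  rcases Finset.mem_insert.mp hmem with heq | hmem'
  · have h1' : r' = rhat := congrArg Prod.fst heq
    have h2' : p.2 = c := congrArg Prod.snd heq
    obtain ⟨c', hc', hcm⟩ := hI.2 p hp r (by omega) (by rw [h2']; exact hrc)
    exact absurd hcm (hRmax c' (by omega))
  · obtain ⟨c', hc', hcm⟩ := hI.2 p hp r' hr' hmem'
    exact ⟨c', hc', Finset.mem_insert_of_mem hcm⟩

lemma gstep_f {T U : Diagram} (hI : RedInv D T) (h : GStep T U) :
    GStep ⟨T.cells \ SofD D, T.ghosts⟩ ⟨U.cells \ SofD D, U.ghosts⟩ := by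
  obtain ⟨r, c, rhat, ⟨⟨hrc, hRmax⟩, hng, h1, hlt, hempty, hbet⟩, rfl⟩ := h
  have hrcS : (r, c) ∉ SofD D := by
    intro hS
    obtain ⟨c', hc', hm⟩ := S_not_rmost hS
    exact hRmax c' hc' (hI.1 hm)
  have hhatS : (rhat, c) ∉ SofD D := fun hS => hempty (hI.1 (SofD_subset hS))
  refine ⟨r, c, rhat, ⟨⟨Finset.mem_sdiff.mpr ⟨hrc, hrcS⟩,
    fun c' hc' hm => hRmax c' hc' (Finset.mem_sdiff.mp hm).1⟩, hng, h1, hlt,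
    fun hm => hempty (Finset.mem_sdiff.mp hm).1, fun r' hr1 hr2 => ?_⟩, ?_⟩
  · obtain ⟨hcm, hgm⟩ := hbet r' hr1 hr2
    refine ⟨Finset.mem_sdiff.mpr ⟨hcm, fun hS => ?_⟩, hgm⟩
    obtain ⟨c', hc', hm⟩ := hI.2 (r', c) hS r hr2 hrc
    exact hRmax c' hc' hm
  · show (⟨(insert (rhat, c) T.cells) \ SofD D, _⟩ : Diagram) = _
    rw [applyGhost, Diagram.mk.injEq]
    exact ⟨Finset.insert_sdiff_of_notMem _ hhatS, rfl⟩

lemma fwd {T : Diagram} (h : T ∈ GKD (⟨D, ∅⟩ : Diagram)) :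
    RedInv D T ∧
      (⟨T.cells \ SofD D, T.ghosts⟩ : Diagram) ∈ GKD (⟨D \ SofD D, ∅⟩ : Diagram) := by
  have h' : Relation.ReflTransGen GStep ⟨D, ∅⟩ T := h
  induction h' with
  | refl => exact ⟨redInv_base, Relation.ReflTransGen.refl⟩
  | tail hsteps hstep ih =>
    have ih' := ih hsteps
    exact ⟨redInv_step ih'.1 hstep, ih'.2.tail (gstep_f ih'.1 hstep)⟩

lemma gstep_g {U V : Diagram}
    (hI : RedInv D ⟨U.cells ∪ SofD D, U.ghosts⟩)
    (hsub : D \ SofD D ⊆ U.cells)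
    (hdisj : ∀ p ∈ SofD D, p ∉ U.cells)
    (h : GStep U V) :
    GStep (⟨U.cells ∪ SofD D, U.ghosts⟩ : Diagram) ⟨V.cells ∪ SofD D, V.ghosts⟩ ∧
      (∀ p ∈ SofD D, p ∉ V.cells) ∧ U.cells ⊆ V.cells := by
  obtain ⟨r, c, rhat, ⟨⟨hrc, hRmax⟩, hng, h1, hlt, hempty, hbet⟩, rfl⟩ := h
  have hRmax' : ∀ c' > c, (r, c') ∉ U.cells ∪ SofD D := by
    intro c' hc' hm
    rcases Finset.mem_union.mp hm with hm | hm
    · exact hRmax c' hc' hm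
    · exact notS_of_right hsub hRmax hc' hm
  have hhatS : (rhat, c) ∉ SofD D := by
    intro hS
    obtain ⟨c', hc', hm⟩ := hI.2 (rhat, c) hS r hlt (Finset.mem_union_left _ hrc)
    exact hRmax' c' hc' hm
  refine ⟨⟨r, c, rhat, ⟨⟨Finset.mem_union_left _ hrc, hRmax'⟩, hng, h1, hlt,
    fun hm => ?_, fun r' hr1 hr2 => ?_⟩, ?_⟩, fun p hp hm => ?_, Finset.subset_insert _ _⟩
  · rcases Finset.mem_union.mp hm with hm | hm
    · exact hempty hm
    · exact hhatS hm
  · exact ⟨Finset.mem_union_left _ (hbet r' hr1 hr2).1, (hbet r' hr1 hr2).2⟩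
  · show (⟨(insert (rhat, c) U.cells) ∪ SofD D, _⟩ : Diagram) = _
    rw [applyGhost, Diagram.mk.injEq]
    exact ⟨Finset.insert_union _ _ _, rfl⟩
  · rcases Finset.mem_insert.mp hm with heq | hm
    · exact hhatS (heq ▸ hp)
    · exact hdisj p hp hm

lemma bwd {U : Diagram} (h : U ∈ GKD (⟨D \ SofD D, ∅⟩ : Diagram)) :
    (⟨U.cells ∪ SofD D, U.ghosts⟩ : Diagram) ∈ GKD (⟨D, ∅⟩ : Diagram) ∧
      D \ SofD D ⊆ U.cells ∧ (∀ p ∈ SofD D, p ∉ U.cells) := by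
  have h' : Relation.ReflTransGen GStep ⟨D \ SofD D, ∅⟩ U := h
  induction h' with
  | refl =>
    refine ⟨?_, subset_rfl, fun p hp hm => (Finset.mem_sdiff.mp hm).2 hp⟩
    have : (⟨(D \ SofD D) ∪ SofD D, (∅ : Finset (ℕ × ℕ))⟩ : Diagram) = ⟨D, ∅⟩ := by
      rw [Diagram.mk.injEq]
      exact ⟨Finset.sdiff_union_of_subset SofD_subset, rfl⟩
    rw [this]
    exact Relation.ReflTransGen.refl
  | tail hsteps hstep ih =>
    obtain ⟨hmem, hsub, hdisj⟩ := ih hsteps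
    have hI := (fwd (D := D) hmem).1
    obtain ⟨hg, hd2, hmono⟩ := gstep_g hI hsub hdisj hstep
    exact ⟨hmem.tail hg, hsub.trans hmono, hd2⟩

end ReductionAux

/-- The reduction f_D : GKD(D) → GKD(f_D(D)) is a ghost-cell
preserving bijection; consequently MaxG-hat(D) = MaxG-hat(f_D(D)). -/
theorem reduction_bijection (D : Finset (ℕ × ℕ)) :
    Set.BijOn (fun T : Diagram => (⟨T.cells \ SofD D, T.ghosts⟩ : Diagram))
      (GKD ⟨D, ∅⟩) (GKD ⟨D \ SofD D, ∅⟩) ∧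
    (∀ T ∈ GKD ⟨D, ∅⟩,
      ((⟨T.cells \ SofD D, T.ghosts⟩ : Diagram)).ghosts = T.ghosts) ∧
    MaxGhat ⟨D, ∅⟩ = MaxGhat ⟨D \ SofD D, ∅⟩ := by
  classical
  have hf : ∀ T ∈ GKD (⟨D, ∅⟩ : Diagram),
      (⟨T.cells \ SofD D, T.ghosts⟩ : Diagram) ∈ GKD (⟨D \ SofD D, ∅⟩ : Diagram) :=
    fun T h => (fwd h).2
  have hScells : ∀ T ∈ GKD (⟨D, ∅⟩ : Diagram), SofD D ⊆ T.cells :=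
    fun T h => SofD_subset.trans (fwd h).1.1
  refine ⟨⟨hf, ?_, ?_⟩, fun T _ => rfl, ?_⟩
  · intro T1 h1 T2 h2 heq
    simp only [Diagram.mk.injEq] at heq
    have hc : T1.cells = T2.cells := by
      have e1 := Finset.sdiff_union_of_subset (hScells T1 h1)
      have e2 := Finset.sdiff_union_of_subset (hScells T2 h2)
      rw [← e1, ← e2, heq.1]
    exact Diagram.ext' hc heq.2
  · intro U hU
    obtain ⟨hmem, hsub, hdisj⟩ := bwd hU
    refine ⟨⟨U.cells ∪ SofD D, U.ghosts⟩, hmem, ?_⟩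
    refine Diagram.ext' ?_ rfl
    show (U.cells ∪ SofD D) \ SofD D = U.cells
    ext p
    simp only [Finset.mem_sdiff, Finset.mem_union]
    constructor
    · rintro ⟨hp | hp, hn⟩
      · exact hp
      · exact absurd hp hn
    · intro hp
      exact ⟨Or.inl hp, fun hS => hdisj p hS hp⟩
  · have : {n | ∃ T ∈ GKD (⟨D, ∅⟩ : Diagram), T.ghosts.card = n} =
        {n | ∃ T ∈ GKD (⟨D \ SofD D, ∅⟩ : Diagram), T.ghosts.card = n} := by
      ext n
      constructor
      · rintro ⟨T, hT, rfl⟩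
        exact ⟨⟨T.cells \ SofD D, T.ghosts⟩, hf T hT, rfl⟩
      · rintro ⟨U, hU, rfl⟩
        exact ⟨⟨U.cells ∪ SofD D, U.ghosts⟩, (bwd hU).1, rfl⟩
    rw [MaxGhat, MaxGhat, this]
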